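/- arXiv:2103.02427 — 2 statements merged into one kernel-verified Lean document; each statement's English description precedes it below -/
import Mathlib

section
/- Let f(x) = a₁x + a₂x² + a₃x³ + a₄x⁴ + ⋯ be a formal power series with zero constant term and f^(n) its n-fold composition. Then f_4^(n) = a₁^{n−1} a₄ ∑_{i=0}^{n−1} a₁^{3i} + a₁^{n−1} a₂ a₃ [3 a₁ ∑_{i=0}^{n−2} a₁^{3i} ∑_{i₁=0}^{n−i−2} a₁^{2 i₁} + 2 ∑_{i=0}^{n−2} a₁^{3i} ∑_{i₁=0}^{n−i−2} a₁^{i₁}] + a₂³ a₁^{n−2} [∑_{i=0}^{n−2} a₁^{3i} ∑_{i₁=0}^{n−i−2} a₁^{i₁} + 6 a₁² ∑_{i=0}^{n−3} a₁^{3i} ∑_{i₁=0}^{n−i−3} a₁^{2 i₁} ∑_{i₂=0}^{n−i−i₁−3} a₁^{i₂}]. -/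
open PowerSeries Finset

/-- Composition of formal power series (meaningful when `g` has zero constant term):
the coefficient of `x^k` in `f(g(x))` is `∑_{j=0}^{k} f_j · [x^k](g^j)`. -/
noncomputable def pscomp {R : Type*} [CommRing R] (f g : PowerSeries R) : PowerSeries R :=
  PowerSeries.mk fun k =>
    ∑ j ∈ Finset.range (k + 1), (PowerSeries.coeff j f) * (PowerSeries.coeff k (g ^ j))

/-- The `n`-fold composition `f^(n)`: `f^(1) = f`, `f^(n) = f^(n-1) ∘ f`. -/
noncomputable def psiter {R : Type*} [CommRing R] (f : PowerSeries R) : ℕ → PowerSeries R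
  | 0 => PowerSeries.X
  | 1 => f
  | (n + 2) => pscomp (psiter f (n + 1)) f

/-!
Since `f^(n+1) = f^(n) ∘ f`, the coefficient of `x^k` satisfies
`f_k^(n+1) = a₁^k f_k^(n) + ∑_{j<k} f_j^(n) [x^k] f^j`, a triangular system of linear recursions.
Solve it for `k = 1, 2, 3, 4` in turn: the solution of `T(n+1) = S(n+1) + a₁^k T(n)`, `T(0) = 0`,
is the convolution `∑_i a₁^(k i) S(n+1-i)` of the lower-order data with a geometric sequence, and
iterating this produces exactly the nested geometric sums of the formula.
-/

section GeomConv

variable {R : Type*} [CommSemiring R]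

def geomConv (c : R) (S : ℕ → R) (n : ℕ) : R :=
  ∑ i ∈ range n, c ^ i * S (n - i)

lemma geomConv_succ (c : R) (S : ℕ → R) (n : ℕ) :
    geomConv c S (n + 1) = S (n + 1) + c * geomConv c S n := by
  rw [geomConv, sum_range_succ', geomConv, mul_sum, add_comm]
  simp only [pow_zero, one_mul, Nat.sub_zero, Nat.add_sub_add_right, pow_succ, mul_assoc,
    mul_left_comm c]

end GeomConv

section Iterates

variable {R : Type*} [CommRing R] {a : ℕ → R}

lemma coeff_one_pscomp (g : R⟦X⟧) : coeff 1 (pscomp g (mk a)) = coeff 1 g * a 1 := by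
  simp [pscomp, sum_range_succ]

lemma coeff_two_pscomp (h0 : a 0 = 0) (g : R⟦X⟧) :
    coeff 2 (pscomp g (mk a)) = coeff 1 g * a 2 + coeff 2 g * a 1 ^ 2 := by
  simp [pscomp, pow_succ, coeff_mul, Nat.sum_antidiagonal_eq_sum_range_succ_mk, sum_range_succ,
    h0]

lemma coeff_three_pscomp (h0 : a 0 = 0) (g : R⟦X⟧) :
    coeff 3 (pscomp g (mk a)) =
      coeff 1 g * a 3 + coeff 2 g * (2 * a 1 * a 2) + coeff 3 g * a 1 ^ 3 := by
  simp [pscomp, pow_succ, coeff_mul, Nat.sum_antidiagonal_eq_sum_range_succ_mk, sum_range_succ,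
    h0]
  ring

lemma coeff_four_pscomp (h0 : a 0 = 0) (g : R⟦X⟧) :
    coeff 4 (pscomp g (mk a)) =
      coeff 1 g * a 4 + coeff 2 g * (2 * a 1 * a 3 + a 2 ^ 2)
        + coeff 3 g * (3 * a 1 ^ 2 * a 2) + coeff 4 g * a 1 ^ 4 := by
  simp [pscomp, pow_succ, coeff_mul, Nat.sum_antidiagonal_eq_sum_range_succ_mk, sum_range_succ,
    h0]
  ring

lemma psiter_succ_succ (f : R⟦X⟧) (n : ℕ) : psiter f (n + 2) = pscomp (psiter f (n + 1)) f :=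
  rfl

lemma coeff_one_psiter_succ (m : ℕ) : coeff 1 (psiter (mk a) (m + 1)) = a 1 ^ (m + 1) := by
  induction m with
  | zero => simp [psiter]
  | succ k ih => rw [psiter_succ_succ, coeff_one_pscomp, ih, ← pow_succ]

lemma coeff_two_psiter_succ (h0 : a 0 = 0) (m : ℕ) :
    coeff 2 (psiter (mk a) (m + 1)) = a 2 * a 1 ^ m * geomConv (a 1) 1 (m + 1) := by
  induction m with
  | zero => simp [psiter, geomConv]
  | succ k ih =>
    rw [psiter_succ_succ, coeff_two_pscomp h0, coeff_one_psiter_succ, ih]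
    simp only [geomConv_succ, Pi.one_apply]
    ring

lemma coeff_three_psiter_succ (h0 : a 0 = 0) (m : ℕ) :
    coeff 3 (psiter (mk a) (m + 1)) =
      a 1 ^ m * (a 3 * geomConv (a 1 ^ 2) 1 (m + 1)
        + 2 * a 2 ^ 2 * geomConv (a 1 ^ 2) (geomConv (a 1) 1) m) := by
  induction m with
  | zero => simp [psiter, geomConv]
  | succ k ih =>
    rw [psiter_succ_succ, coeff_three_pscomp h0, coeff_one_psiter_succ, coeff_two_psiter_succ h0,
      ih]
    simp only [geomConv_succ, Pi.one_apply]
    ring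

lemma coeff_four_psiter_succ (h0 : a 0 = 0) (m : ℕ) :
    coeff 4 (psiter (mk a) (m + 1)) =
      a 1 ^ m * a 4 * geomConv (a 1 ^ 3) 1 (m + 1)
      + a 1 ^ m * a 2 * a 3 *
          (3 * a 1 * geomConv (a 1 ^ 3) (geomConv (a 1 ^ 2) 1) m
            + 2 * geomConv (a 1 ^ 3) (geomConv (a 1) 1) m)
      + a 2 ^ 3 * a 1 ^ (m - 1) *
          (geomConv (a 1 ^ 3) (geomConv (a 1) 1) m
            + 6 * a 1 ^ 2 *
              geomConv (a 1 ^ 3) (geomConv (a 1 ^ 2) (geomConv (a 1) 1)) (m - 1)) := by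
  induction m with
  | zero => simp [psiter, geomConv]
  | succ k ih =>
    rw [psiter_succ_succ, coeff_four_pscomp h0, coeff_one_psiter_succ, coeff_two_psiter_succ h0,
      coeff_three_psiter_succ h0, ih]
    -- `a₁^(k-1)` only multiplies terms that vanish when `k = 0`
    cases k with
    | zero => simp [geomConv]; ring
    | succ j =>
      simp only [geomConv_succ, Pi.one_apply, Nat.add_sub_cancel]
      ring

end Iterates

theorem coeff_four_psiter_general {K : Type*} [Field K] (a : ℕ → K) (h0 : a 0 = 0)
    (n : ℕ) :
    PowerSeries.coeff 4 (psiter (PowerSeries.mk a) n) =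
      a 1 ^ (n - 1) * a 4 * (∑ i ∈ Finset.range n, a 1 ^ (3 * i))
      + a 1 ^ (n - 1) * a 2 * a 3 *
          (3 * a 1 * ∑ i ∈ Finset.range (n - 1),
              a 1 ^ (3 * i) * ∑ i1 ∈ Finset.range (n - i - 1), a 1 ^ (2 * i1)
           + 2 * ∑ i ∈ Finset.range (n - 1),
              a 1 ^ (3 * i) * ∑ i1 ∈ Finset.range (n - i - 1), a 1 ^ i1)
      + a 2 ^ 3 * a 1 ^ (n - 2) *
          ((∑ i ∈ Finset.range (n - 1),
              a 1 ^ (3 * i) * ∑ i1 ∈ Finset.range (n - i - 1), a 1 ^ i1)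
           + 6 * a 1 ^ 2 * ∑ i ∈ Finset.range (n - 2),
              a 1 ^ (3 * i) * ∑ i1 ∈ Finset.range (n - i - 2),
                a 1 ^ (2 * i1) * ∑ i2 ∈ Finset.range (n - i - i1 - 2), a 1 ^ i2) := by
  obtain _ | m := n
  · simp [psiter, coeff_X]
  have h1 (i : ℕ) : m + 1 - i - 1 = m - i := by omega
  have h2 (i : ℕ) : m + 1 - i - 2 = m - 1 - i := by omega
  have h3 (i i1 : ℕ) : m + 1 - i - i1 - 2 = m - 1 - i - i1 := by omega
  rw [coeff_four_psiter_succ h0, show m + 1 - 2 = m - 1 by omega]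
  simp only [geomConv, Pi.one_apply, mul_one, ← pow_mul, Nat.add_sub_cancel, h1, h2, h3]

/-- The explicit formula for `f_4^(n)` (empty sums are `0`). -/
theorem coeff_four_psiter {K : Type*} [Field K] (a : ℕ → K) (h0 : a 0 = 0) (ha1 : a 1 ≠ 0)
    (n : ℕ) (hn : 1 ≤ n) :
    PowerSeries.coeff 4 (psiter (PowerSeries.mk a) n) =
      a 1 ^ (n - 1) * a 4 * (∑ i ∈ Finset.range n, a 1 ^ (3 * i))
      + a 1 ^ (n - 1) * a 2 * a 3 *
          (3 * a 1 * ∑ i ∈ Finset.range (n - 1),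
              a 1 ^ (3 * i) * ∑ i1 ∈ Finset.range (n - i - 1), a 1 ^ (2 * i1)
           + 2 * ∑ i ∈ Finset.range (n - 1),
              a 1 ^ (3 * i) * ∑ i1 ∈ Finset.range (n - i - 1), a 1 ^ i1)
      + a 2 ^ 3 * a 1 ^ (n - 2) *
          ((∑ i ∈ Finset.range (n - 1),
              a 1 ^ (3 * i) * ∑ i1 ∈ Finset.range (n - i - 1), a 1 ^ i1)
           + 6 * a 1 ^ 2 * ∑ i ∈ Finset.range (n - 2),
              a 1 ^ (3 * i) * ∑ i1 ∈ Finset.range (n - i - 2),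
                a 1 ^ (2 * i1) * ∑ i2 ∈ Finset.range (n - i - i1 - 2), a 1 ^ i2) :=
  coeff_four_psiter_general a h0 n
end

section
/- Let f(x) = x + a₂x² + a₃x³ + a₄x⁴ + ⋯ (with a₁ = 1) and f^(n) its n-fold composition. Then the coefficient of x⁴ satisfies f_4^(n) = C(n,1) a₄ + C(n,2)(5 a₂ a₃ + a₂³) + 6 C(n,3) a₂³. -/
/-!
Since `f` has no constant term, `f^(n+1) = f^(n) ∘ f`, and writing `f = X * g` with
`g(0) = 1`, the coefficient of `x^k` in `f^j` is the coefficient of `x^(k-j)` in `g^j`, which is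
`0`, `1`, `j g₁` or `j g₂ + C(j,2) g₁²` for `k - j < 0, = 0, 1, 2`. Hence `[x^k] f^(n+1)` is
determined by `[x^j] f^(n)` for `j ≤ k`, and induction on `n` yields the coefficients of `f^(n)`
one degree at a time; the binomial coefficients come from `∑_{m<n} m = C(n,2)` and
`∑_{m<n} C(m,2) = C(n,3)`.
-/

open PowerSeries Finset

section Powers

variable {R : Type*} [CommRing R] {g : R⟦X⟧}

theorem coeff_X_mul_pow (j k : ℕ) :
    coeff k ((X * g) ^ j) = if j ≤ k then coeff (k - j) (g ^ j) else 0 := by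
  rw [mul_pow, coeff_X_pow_mul']

theorem constantCoeff_pow_of_constantCoeff_eq_one (hg : constantCoeff g = 1) (j : ℕ) :
    constantCoeff (g ^ j) = 1 := by
  rw [map_pow, hg, one_pow]

theorem coeff_one_pow_of_constantCoeff_eq_one (hg : constantCoeff g = 1) (j : ℕ) :
    coeff 1 (g ^ j) = j * coeff 1 g := by
  rw [coeff_one_pow, hg, one_pow, mul_one]

theorem coeff_two_pow_of_constantCoeff_eq_one (hg : constantCoeff g = 1) (j : ℕ) :
    coeff 2 (g ^ j) = j * coeff 2 g + j.choose 2 * coeff 1 g ^ 2 := by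
  induction j with
  | zero => simp
  | succ j ih =>
    rw [pow_succ, coeff_mul, Nat.sum_antidiagonal_eq_sum_range_succ_mk]
    simp only [sum_range_succ, sum_range_zero, zero_add, Nat.reduceSub,
      coeff_zero_eq_constantCoeff, constantCoeff_pow_of_constantCoeff_eq_one hg,
      coeff_one_pow_of_constantCoeff_eq_one hg, ih, hg, Nat.choose_succ_succ', Nat.choose_one_right]
    push_cast
    ring

end Powers

section Iterates

variable {R : Type*} [CommRing R] {f : R⟦X⟧}

theorem coeff_pscomp (g : R⟦X⟧) (k : ℕ) :
    coeff k (pscomp g f) = ∑ j ∈ range (k + 1), coeff j g * coeff k (f ^ j) :=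
  coeff_mk _ _

theorem pscomp_X (hf : constantCoeff f = 0) : pscomp X f = f := by
  ext k
  rcases k with _ | k
  · simp [coeff_pscomp, hf]
  · rw [coeff_pscomp, sum_eq_single 1 (fun j _ hj => by simp [coeff_X, hj]) (by simp), coeff_X,
      if_pos rfl, one_mul, pow_one]

theorem psiter_succ (hf : constantCoeff f = 0) (n : ℕ) :
    psiter f (n + 1) = pscomp (psiter f n) f := by
  rcases n with _ | n
  · exact (pscomp_X hf).symm
  · rfl

variable (hf : constantCoeff f = 0) (h1 : coeff 1 f = 1)
include hf h1

theorem coeff_one_psiter (n : ℕ) : coeff 1 (psiter f n) = 1 := by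
  obtain ⟨g, rfl⟩ := X_dvd_iff.mpr hf
  have hg : constantCoeff g = 1 := by simpa using h1
  induction n with
  | zero => simp [psiter]
  | succ n ih => simp [psiter_succ hf, coeff_pscomp, coeff_X_mul_pow, sum_range_succ, ih, hg]

theorem coeff_two_psiter (n : ℕ) : coeff 2 (psiter f n) = n * coeff 2 f := by
  obtain ⟨g, rfl⟩ := X_dvd_iff.mpr hf
  have hg : constantCoeff g = 1 := by simpa using h1
  induction n with
  | zero => simp [psiter, coeff_X]
  | succ n ih =>
    simp [psiter_succ hf, coeff_pscomp, coeff_X_mul_pow, sum_range_succ, ih, hg,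
      coeff_one_psiter hf h1, constantCoeff_pow_of_constantCoeff_eq_one]
    ring

theorem coeff_three_psiter (n : ℕ) :
    coeff 3 (psiter f n) = n * coeff 3 f + 2 * n.choose 2 * coeff 2 f ^ 2 := by
  obtain ⟨g, rfl⟩ := X_dvd_iff.mpr hf
  have hg : constantCoeff g = 1 := by simpa using h1
  induction n with
  | zero => simp [psiter, coeff_X]
  | succ n ih =>
    simp [psiter_succ hf, coeff_pscomp, coeff_X_mul_pow, sum_range_succ, ih, hg,
      coeff_one_psiter hf h1, coeff_two_psiter hf h1, constantCoeff_pow_of_constantCoeff_eq_one,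
      coeff_one_pow_of_constantCoeff_eq_one, Nat.choose_succ_succ']
    ring

theorem coeff_four_psiter_s12 (n : ℕ) :
    coeff 4 (psiter f n) = n * coeff 4 f + n.choose 2 * (5 * coeff 2 f * coeff 3 f + coeff 2 f ^ 3)
      + 6 * n.choose 3 * coeff 2 f ^ 3 := by
  obtain ⟨g, rfl⟩ := X_dvd_iff.mpr hf
  have hg : constantCoeff g = 1 := by simpa using h1
  induction n with
  | zero => simp [psiter, coeff_X]
  | succ n ih =>
    simp [psiter_succ hf, coeff_pscomp, coeff_X_mul_pow, sum_range_succ, ih, hg,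
      coeff_one_psiter hf h1, coeff_two_psiter hf h1, coeff_three_psiter hf h1,
      constantCoeff_pow_of_constantCoeff_eq_one, coeff_one_pow_of_constantCoeff_eq_one,
      coeff_two_pow_of_constantCoeff_eq_one, Nat.choose_succ_succ']
    ring

end Iterates

theorem schroder_four_general {R : Type*} [CommRing R] (a : ℕ → R) (h0 : a 0 = 0) (h1 : a 1 = 1)
    (n : ℕ) :
    PowerSeries.coeff 4 (psiter (PowerSeries.mk a) n) =
      (n.choose 1 : R) * a 4 + (n.choose 2 : R) * (5 * a 2 * a 3 + a 2 ^ 3)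
        + 6 * (n.choose 3 : R) * a 2 ^ 3 := by
  simpa using coeff_four_psiter_s12 (f := mk a) (by simpa using h0) (by simpa using h1) n

/-- Schröder's formula for the fourth coefficient when `a₁ = 1`:
`f_4^(n) = C(n,1) a₄ + C(n,2)(5 a₂ a₃ + a₂³) + 6 C(n,3) a₂³`. -/
theorem schroder_four {R : Type*} [CommRing R] (a : ℕ → R) (h0 : a 0 = 0) (h1 : a 1 = 1)
    (n : ℕ) (hn : 1 ≤ n) :
    PowerSeries.coeff 4 (psiter (PowerSeries.mk a) n) =
      (n.choose 1 : R) * a 4 + (n.choose 2 : R) * (5 * a 2 * a 3 + a 2 ^ 3)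
        + 6 * (n.choose 3 : R) * a 2 ^ 3 :=
  schroder_four_general a h0 h1 n
end
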